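/- Let n ≥ 1, let Q be a monic real polynomial of degree n + 1, and let w_1 ≥ w_2 ≥ ... ≥ w_n be real numbers such that Q'(x) = (n+1)·∏_{j=1}^{n} (x - w_j). If Q(w_j) ≥ 0 for every even j ∈ {1, ..., n} and Q(w_j) ≤ 0 for every odd j ∈ {1, ..., n}, then all complex roots of Q are real. -/

import Mathlib

/-!
Put `t 0 = b ≫ 0`, `t j = w j` for `1 ≤ j ≤ n` and `t (n + 1) = a ≪ 0`. Then `t` is nonincreasing
and `(-1) ^ j * Q (t j) ≥ 0`, so the intermediate value theorem gives roots
`r j ∈ [t (j + 1), t j]` of `Q` for `j = 0, …, n`. If a value `v` is taken by `k` of the `r j`,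
the `k - 1` points `w i` interlaced between them are all equal to `v`, so `v` is a root of `Q'`
of multiplicity at least `k - 1` and hence a root of `Q` of multiplicity at least `k`. Thus `Q`
has `n + 1 = deg Q` real roots counted with multiplicity.
-/

open Polynomial Finset

/-- A real polynomial is hyperbolic if all of its complex roots are real. -/
def Hyperbolic (p : Polynomial ℝ) : Prop :=
  ∀ z ∈ (p.map (algebraMap ℝ ℂ)).roots, z.im = 0

theorem Polynomial.exists_isRoot_mem_Icc_of_eval_mul_nonpos (p : ℝ[X]) {a b : ℝ} (hab : a ≤ b)
    (h : p.eval a * p.eval b ≤ 0) : ∃ c ∈ Set.Icc a b, p.IsRoot c := by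
  have h0 : (0 : ℝ) ∈ Set.uIcc (p.eval a) (p.eval b) := by
    rcases mul_nonpos_iff.1 h with h | h
    · exact Set.mem_uIcc.2 (.inr ⟨h.2, h.1⟩)
    · exact Set.mem_uIcc.2 (.inl h)
  obtain ⟨c, hc, hc0⟩ := intermediate_value_uIcc p.continuous.continuousOn h0
  exact ⟨c, Set.uIcc_of_le hab ▸ hc, hc0⟩

theorem Polynomial.Monic.exists_ge_eval_nonneg {p : ℝ[X]} (hp : p.Monic) (hdeg : 0 < p.degree)
    (x : ℝ) : ∃ b ≥ x, 0 ≤ p.eval b := by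
  have htop := p.tendsto_atTop_of_leadingCoeff_nonneg hdeg (by simp [hp.leadingCoeff])
  obtain ⟨b, hb, hbx⟩ := ((htop.eventually_ge_atTop 0).and (Filter.eventually_ge_atTop x)).exists
  exact ⟨b, hbx, hb⟩

theorem Polynomial.Monic.exists_le_neg_one_pow_mul_eval_nonneg {p : ℝ[X]} (hp : p.Monic)
    (hdeg : 0 < p.degree) (x : ℝ) : ∃ a ≤ x, 0 ≤ (-1) ^ p.natDegree * p.eval a := by
  obtain ⟨b, hbx, hb⟩ := hp.neg_one_pow_natDegree_mul_comp_neg_X.exists_ge_eval_nonneg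
    (by simpa [degree_mul] using hdeg) (-x)
  exact ⟨-b, by linarith, by simpa using hb⟩

theorem Polynomial.Monic.exists_antitone_extension_of_neg_one_pow_mul_eval_nonneg {p : ℝ[X]}
    (hp : p.Monic) {n : ℕ} (hn : 1 ≤ n) (hpn : p.natDegree = n + 1) {w : ℕ → ℝ}
    (hw : ∀ i ∈ Ico 1 n, w (i + 1) ≤ w i) (hsign : ∀ j ∈ Icc 1 n, 0 ≤ (-1) ^ j * p.eval (w j)) :
    ∃ t : ℕ → ℝ, (∀ j ≤ n, t (j + 1) ≤ t j) ∧ (∀ j ≤ n + 1, 0 ≤ (-1) ^ j * p.eval (t j)) ∧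
      ∀ j ∈ Icc 1 n, t j = w j := by
  have hdeg : 0 < p.degree := by
    rw [degree_eq_natDegree hp.ne_zero, hpn]; exact_mod_cast n.succ_pos
  obtain ⟨b, hbw, hb⟩ := hp.exists_ge_eval_nonneg hdeg (w 1)
  obtain ⟨a, haw, ha⟩ := hp.exists_le_neg_one_pow_mul_eval_nonneg hdeg (w n)
  refine ⟨fun j => if j = 0 then b else if j ≤ n then w j else a, ?_, ?_, ?_⟩
  · rintro (_ | j) hj
    · simpa [hn] using hbw
    · rcases hj.lt_or_eq with hjn | rfl
      · simpa [hj, Nat.succ_le_of_lt hjn] using hw (j + 1) (mem_Ico.2 ⟨by omega, hjn⟩)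
      · simpa using haw
  · intro j hj
    rcases hj.lt_or_eq with hj | rfl
    · rcases Nat.eq_zero_or_pos j with rfl | hj₀
      · simpa using hb
      simpa [hj₀.ne', Nat.le_of_lt_succ hj] using hsign j (mem_Icc.2 ⟨hj₀, by omega⟩)
    · simpa [hpn] using ha
  · intro j hj
    obtain ⟨hj₁, hjn⟩ := mem_Icc.1 hj
    simp [hjn, Nat.one_le_iff_ne_zero.1 hj₁]

theorem mul_nonpos_of_neg_one_pow_mul_nonneg {R : Type*} [CommRing R] [LinearOrder R]
    [IsStrictOrderedRing R] {x y : R} {j : ℕ} (hx : 0 ≤ (-1) ^ j * x)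
    (hy : 0 ≤ (-1) ^ (j + 1) * y) : x * y ≤ 0 := by
  rcases neg_one_pow_eq_or R j with h | h <;> simp only [pow_succ, h] at hx hy <;> nlinarith

def Interlaces {α : Type*} [Preorder α] (m : ℕ) (r t : ℕ → α) : Prop :=
  ∀ j ≤ m, r j ∈ Set.Icc (t (j + 1)) (t j)

namespace Interlaces

variable {α : Type*} [LinearOrder α] {m : ℕ} {r t : ℕ → α}

theorem antitoneOn (h : Interlaces m r t) : AntitoneOn r (Set.Iic m) :=
  antitoneOn_of_succ_le Set.ordConnected_Iic fun j _ _ hj =>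
    (h (j + 1) hj).2.trans (h j (Nat.le_of_succ_le hj)).1

theorem card_filter_eq_le (h : Interlaces m r t) (v : α) :
    #{j ∈ range (m + 1) | r j = v} ≤ #{i ∈ Icc 1 m | t i = v} + 1 := by
  set s := {j ∈ range (m + 1) | r j = v}
  rcases s.eq_empty_or_nonempty with hs | hs
  · simp [hs]
  set j₁ := s.min' hs
  set j₂ := s.max' hs
  obtain ⟨hj₁, hrj₁⟩ := mem_filter.mp (s.min'_mem hs)
  obtain ⟨hj₂, hrj₂⟩ := mem_filter.mp (s.max'_mem hs)
  rw [mem_range] at hj₁ hj₂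
  have hs_sub : s ⊆ Icc j₁ j₂ := fun i hi => mem_Icc.2 ⟨s.min'_le i hi, s.le_max' i hi⟩
  -- between two occurrences of `v` among the `r j`, every `t i` is squeezed to `v`
  have hIoc_sub : Ioc j₁ j₂ ⊆ {i ∈ Icc 1 m | t i = v} := by
    intro i hi
    obtain ⟨hi₁, hi₂⟩ := mem_Ioc.mp hi
    obtain ⟨k, rfl⟩ : ∃ k, i = k + 1 := Nat.exists_eq_add_one.2 (by omega)
    refine mem_filter.2 ⟨mem_Icc.2 ⟨by omega, by omega⟩, le_antisymm ?_ ?_⟩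
    · calc t (k + 1) ≤ r k := (h k (by omega)).1
        _ ≤ r j₁ := h.antitoneOn (Set.mem_Iic.2 (by omega)) (Set.mem_Iic.2 (by omega)) (by omega)
        _ = v := hrj₁
    · calc v = r j₂ := hrj₂.symm
        _ ≤ r (k + 1) := h.antitoneOn (Set.mem_Iic.2 (by omega)) (Set.mem_Iic.2 (by omega)) hi₂
        _ ≤ t (k + 1) := (h (k + 1) (by omega)).2
  calc #s ≤ #(Icc j₁ j₂) := card_le_card hs_sub
    _ = #(Ioc j₁ j₂) + 1 := by
      simp only [Nat.card_Icc, Nat.card_Ioc]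
      have : j₁ ≤ j₂ := s.min'_le_max' hs
      omega
    _ ≤ #{i ∈ Icc 1 m | t i = v} + 1 := by gcongr

theorem map_le_roots {R : Type*} [CommRing R] [IsDomain R] [CharZero R] [LinearOrder R]
    {p : R[X]} (hp : p ≠ 0) {m : ℕ} {r t : ℕ → R} (h : Interlaces m r t)
    (hroot : ∀ j ≤ m, p.IsRoot (r j)) (hder : (Icc 1 m).val.map t ≤ p.derivative.roots) :
    (range (m + 1)).val.map r ≤ p.roots := by
  classical
  refine Multiset.le_iff_count.2 fun v => ?_
  by_cases hv : p.IsRoot v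
  · have hder_v := Multiset.le_iff_count.1 hder v
    rw [count_roots, derivative_rootMultiplicity_of_root hv] at hder_v
    have hpos := (rootMultiplicity_pos hp).2 hv
    simp only [count_roots, Multiset.count_map, eq_comm (a := v), ← filter_val, card_val]
      at hder_v ⊢
    have := h.card_filter_eq_le v
    omega
  · rw [Multiset.count_eq_zero.2]
    · exact Nat.zero_le _
    rintro hmem
    obtain ⟨j, hj, rfl⟩ := Multiset.mem_map.1 hmem
    exact hv (hroot j (Nat.lt_succ_iff.1 (mem_range.1 hj)))

end Interlaces

theorem Polynomial.exists_interlaces_isRoot (p : ℝ[X]) {m : ℕ} {t : ℕ → ℝ}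
    (ht : ∀ j ≤ m, t (j + 1) ≤ t j) (hsign : ∀ j ≤ m + 1, 0 ≤ (-1) ^ j * p.eval (t j)) :
    ∃ r : ℕ → ℝ, Interlaces m r t ∧ ∀ j ≤ m, p.IsRoot (r j) := by
  have hroots : ∀ j, ∃ c, j ≤ m → c ∈ Set.Icc (t (j + 1)) (t j) ∧ p.IsRoot c := by
    intro j
    by_cases hj : j ≤ m
    · have hprod := mul_nonpos_of_neg_one_pow_mul_nonneg (hsign j (by omega))
        (hsign (j + 1) (by omega))
      obtain ⟨c, hc, hroot⟩ :=
        p.exists_isRoot_mem_Icc_of_eval_mul_nonpos (ht j hj) ((mul_comm _ _).trans_le hprod)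
      exact ⟨c, fun _ => ⟨hc, hroot⟩⟩
    · exact ⟨0, fun h => absurd h hj⟩
  choose r hr using hroots
  exact ⟨r, fun j hj => (hr j hj).1, fun j hj => (hr j hj).2⟩

theorem hyperbolic_of_natDegree_le_card_roots {p : ℝ[X]} (h : p.natDegree ≤ p.roots.card) :
    Hyperbolic p := by
  have hsplit : p.Splits := splits_iff_card_roots.2 (le_antisymm p.card_roots' h)
  intro z hz
  rw [hsplit.roots_map] at hz
  obtain ⟨x, -, rfl⟩ := Multiset.mem_map.mp hz
  simp

theorem stmt_10 (n : ℕ) (hn : 1 ≤ n) (Q : Polynomial ℝ)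
    (hQmonic : Q.Monic) (hQdeg : Q.natDegree = n + 1)
    (w : ℕ → ℝ) (hw : ∀ i ∈ Finset.Ico 1 n, w (i + 1) ≤ w i)
    (hQ' : derivative Q = C ((n : ℝ) + 1) * ∏ j ∈ Finset.Icc 1 n, (X - C (w j)))
    (heven : ∀ j ∈ Finset.Icc 1 n, Even j → 0 ≤ Q.eval (w j))
    (hodd : ∀ j ∈ Finset.Icc 1 n, Odd j → Q.eval (w j) ≤ 0) :
    Hyperbolic Q := by
  have hsign : ∀ j ∈ Icc 1 n, 0 ≤ (-1) ^ j * Q.eval (w j) := by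
    intro j hj
    rcases Nat.even_or_odd j with he | ho
    · simpa [he.neg_one_pow] using heven j hj he
    · simpa [ho.neg_one_pow] using hodd j hj ho
  obtain ⟨t, ht_anti, ht_sign, htw⟩ :=
    hQmonic.exists_antitone_extension_of_neg_one_pow_mul_eval_nonneg hn hQdeg hw hsign
  obtain ⟨r, hr, hroot⟩ := Q.exists_interlaces_isRoot ht_anti ht_sign
  have hder : (Icc 1 n).val.map t = Q.derivative.roots := by
    rw [hQ', roots_C_mul _ (by positivity), prod_eq_multiset_prod,
      ← Function.comp_def (fun a => X - C a) w, ← Multiset.map_map, roots_multiset_prod_X_sub_C]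
    exact Multiset.map_congr rfl htw
  apply hyperbolic_of_natDegree_le_card_roots
  calc Q.natDegree = ((range (n + 1)).val.map r).card := by simp [hQdeg]
    _ ≤ Q.roots.card := Multiset.card_le_card (hr.map_le_roots hQmonic.ne_zero hroot hder.le)
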